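/- Let D ⊂ ℝ² be the Zalcman-type domain D = 𝔻 \ closure(⋃_{l≥1} D(x_l, r_l)) with x_l = 2^{−l}, r_l = 2^{−3l}, and for j ≥ 1 set D^{t_j} = D(0, 1 + 2^{−2^{j/3}}) \ closure(⋃_{l=1}^j D(x_l, r̃_l)) with r_l − r̃_l = 2^{−2^{j/3}}, t_j = 2^{−j}. Then for all sufficiently large j: sup_{x ∈ ∂D} dist(x, ∂D^{t_j}) ≤ t_j and inf_{x ∈ ∂D} dist(x, ∂D^{t_j}) ≥ exp(−(log 2)/t_j^{1/3}). -/

import Mathlib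

open Metric

/-- Center `x_l = 2^{−l}` of the `l`-th deleted disc. -/
noncomputable def zalcmanCenter (l : ℕ) : ℂ := ((1 / 2 ^ l : ℝ) : ℂ)

/-- Radius `r_l = 2^{−3l}` of the `l`-th deleted disc. -/
noncomputable def zalcmanRadius (l : ℕ) : ℝ := 1 / 2 ^ (3 * l)

/-- The shrinking amount `2^{−2^{j/3}}`. -/
noncomputable def zalcmanEps (j : ℕ) : ℝ := (2 : ℝ) ^ (-(2 : ℝ) ^ ((j : ℝ) / 3))

/-- `t_j = 2^{−j}`. -/
noncomputable def zalcmanT (j : ℕ) : ℝ := 1 / 2 ^ j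

/-- The Zalcman-type domain `D = 𝔻 \ closure(⋃_{l ≥ 1} D(x_l, r_l))`. -/
noncomputable def zalcmanD : Set ℂ :=
  Metric.ball 0 1 \ closure (⋃ l : ℕ, Metric.ball (zalcmanCenter (l + 1)) (zalcmanRadius (l + 1)))

/-- The enlarged domain
`D^{t_j} = D(0, 1 + 2^{−2^{j/3}}) \ closure(⋃_{l=1}^{j} D(x_l, r̃_l))` with
`r̃_l = r_l − 2^{−2^{j/3}}`. -/
noncomputable def zalcmanDt (j : ℕ) : Set ℂ :=
  Metric.ball 0 (1 + zalcmanEps j) \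
    closure (⋃ l ∈ Finset.Icc 1 j, Metric.ball (zalcmanCenter l) (zalcmanRadius l - zalcmanEps j))

/-!
Write `ε = 2^{−2^{j/3}}`. The boundary of `D` lies in `{0}`, the unit circle and the circles
`∂D(x_l, r_l)`: the discs accumulate only at `0`. The boundary of `D^{t_j}` is contained in the
circle of radius `1 + ε` and the closed discs `D̄(x_l, r_l − ε)`, `l ≤ j`, and contains all these
circles, since the closed discs are pairwise disjoint. The unit circle and each `∂D(x_l, r_l)` with
`l ≤ j` are at distance `ε ≤ t_j` from their shrunk counterparts, and the rest of `∂D`, near `0`,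
lies within `t_j` of the boundary point `x_j − r_j + ε`. Conversely `closure D` lies in the closed
unit disc and misses every open disc `D(x_l, r_l)`, hence stays at distance `≥ ε` from
`∂D^{t_j}`. Finally `ε = exp(−log 2 / t_j^{1/3})`, and `ε < r_j` as soon as `3j < 2^{j/3}`.
-/

open Set Filter Topology

section TopologicalSpace

variable {X : Type*} [TopologicalSpace X] {s t : Set X}

theorem frontier_diff_subset_frontier_sdiff (ht : IsClosed t) :
    frontier s \ t ⊆ frontier (s \ t) := by
  rw [sdiff_eq, sdiff_eq, ← frontier_inter_open_inter ht.isOpen_compl]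
  exact inter_subset_left

theorem inter_frontier_subset_frontier_sdiff (hs : IsOpen s) :
    s ∩ frontier t ⊆ frontier (s \ t) := by
  have h := frontier_inter_open_inter (s := tᶜ) hs
  rw [frontier_compl, inter_comm tᶜ, ← sdiff_eq] at h
  rw [inter_comm, ← h]
  exact inter_subset_left

end TopologicalSpace

section MetricSpace

variable {α : Type*} [MetricSpace α]

theorem closure_iUnion_subset_insert_of_tendsto {s : ℕ → Set α} {c : α} {δ : ℕ → ℝ}
    (hδ : Tendsto δ atTop (𝓝 0)) (hs : ∀ n, s n ⊆ closedBall c (δ n)) :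
    closure (⋃ n, s n) ⊆ insert c (⋃ n, closure (s n)) := by
  intro p hp
  refine or_iff_not_imp_left.2 fun hpc => ?_
  have hd : 0 < dist p c / 2 := half_pos (dist_pos.2 hpc)
  obtain ⟨N, hN⟩ := eventually_atTop.1 (hδ.eventually (gt_mem_nhds hd))
  have hsplit : (⋃ n, s n) ⊆ (⋃ n ∈ Finset.range N, s n) ∪ closedBall c (dist p c / 2) := by
    refine iUnion_subset fun n => ?_
    rcases lt_or_ge n N with hn | hn
    · exact subset_union_of_subset_left (subset_biUnion_of_mem (by simpa using hn)) _
    · exact subset_union_of_subset_right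
        ((hs n).trans (closedBall_subset_closedBall (hN n hn).le)) _
  have hp' := closure_mono hsplit hp
  rw [closure_union, Finset.closure_biUnion, isClosed_closedBall.closure_eq] at hp'
  rcases hp' with hp' | hp'
  · obtain ⟨n, -, hn⟩ := mem_iUnion₂.1 hp'
    exact mem_iUnion.2 ⟨n, hn⟩
  · exact absurd (mem_closedBall.1 hp') (by linarith)

theorem frontier_ball_diff_closure_subset (c : α) (r : ℝ) (U : Set α) :
    frontier (ball c r \ closure U) ⊆ sphere c r ∪ frontier U := by
  rw [sdiff_eq]
  refine (frontier_inter_subset _ _).trans (union_subset_union ?_ ?_)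
  · exact inter_subset_left.trans frontier_ball_subset_sphere
  · rw [frontier_compl]
    exact inter_subset_right.trans frontier_closure_subset

theorem closure_ball_diff_closure_subset (c : α) (r : ℝ) {U : Set α} (hU : IsOpen U) :
    closure (ball c r \ closure U) ⊆ closedBall c r \ U := by
  rw [sdiff_eq]
  refine (closure_inter_subset_inter_closure _ _).trans
    (inter_subset_inter closure_ball_subset_closedBall ?_)
  rw [closure_compl]
  exact compl_subset_compl.2 hU.subset_interior_closure

theorem closure_biUnion_ball_subset {ι : Type*} (s : Finset ι) (c : ι → α) (r : ι → ℝ) :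
    closure (⋃ k ∈ s, ball (c k) (r k)) ⊆ ⋃ k ∈ s, closedBall (c k) (r k) := by
  rw [Finset.closure_biUnion]
  exact iUnion₂_mono fun k _ => closure_ball_subset_closedBall

end MetricSpace

section NormedSpace

variable {E : Type*} [NormedAddCommGroup E] [NormedSpace ℝ E]

theorem exists_mem_sphere_dist_eq {c p : E} {r s : ℝ} (hp : p ∈ sphere c r) (hr : 0 < r)
    (hs : 0 ≤ s) : ∃ q ∈ sphere c s, dist p q = |r - s| := by
  rw [mem_sphere, dist_eq_norm] at hp
  refine ⟨c + (s / r) • (p - c), ?_, ?_⟩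
  · rw [mem_sphere, dist_eq_norm, add_sub_cancel_left, norm_smul, hp, Real.norm_eq_abs,
      abs_of_nonneg (by positivity), div_mul_cancel₀ _ hr.ne']
  · rw [dist_eq_norm, show p - (c + (s / r) • (p - c)) = (1 - s / r) • (p - c) by module,
      norm_smul, hp, Real.norm_eq_abs, ← abs_of_pos hr, ← abs_mul, abs_of_pos hr, sub_mul,
      one_mul, div_mul_cancel₀ _ hr.ne']

theorem sphere_subset_frontier_closure_biUnion_ball {ι : Type*} {s : Finset ι} {c : ι → E}
    {r : ι → ℝ} (hsep : ∀ i ∈ s, ∀ k ∈ s, i ≠ k → r i + r k < dist (c i) (c k)) {i : ι}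
    (hi : i ∈ s) (hr : 0 < r i) :
    sphere (c i) (r i) ⊆ frontier (closure (⋃ k ∈ s, ball (c k) (r k))) := by
  classical
  intro z hz
  set W := (⋃ k ∈ s.erase i, closedBall (c k) (r k))ᶜ
  have hW : IsOpen W := (isClosed_biUnion_finset fun k _ => isClosed_closedBall).isOpen_compl
  have hzW : z ∈ W := by
    simp only [W, mem_compl_iff, mem_iUnion, Finset.mem_erase, mem_closedBall, not_exists, not_le]
    rintro k ⟨hki, hk⟩
    have hik := hsep i hi k hk (Ne.symm hki)
    have htri := dist_triangle (c i) z (c k)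
    rw [dist_comm (c i) z, mem_sphere.1 hz] at htri
    linarith
  rw [frontier_eq_closure_inter_closure, isClosed_closure.closure_eq]
  refine ⟨closure_mono (subset_biUnion_of_mem (u := fun k => ball (c k) (r k)) hi)
    (by rw [closure_ball _ hr.ne']; exact sphere_subset_closedBall hz), ?_⟩
  have hz' : z ∈ closure (closedBall (c i) (r i))ᶜ := by
    rw [closure_compl, interior_closedBall _ hr.ne', mem_compl_iff, mem_ball, mem_sphere.1 hz]
    exact lt_irrefl _
  refine closure_mono ?_ (hW.inter_closure ⟨hzW, hz'⟩)
  refine (compl_subset_compl.2 (closure_biUnion_ball_subset s c r)).trans' ?_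
  rintro y ⟨hyW, hyi⟩ hy
  obtain ⟨k, hk, hyk⟩ := mem_iUnion₂.1 hy
  rcases eq_or_ne k i with rfl | hki
  · exact hyi hyk
  · exact hyW (mem_iUnion₂.2 ⟨k, Finset.mem_erase.2 ⟨hki, hk⟩, hyk⟩)

end NormedSpace

theorem dist_zalcmanCenter_ofReal (l : ℕ) (a : ℝ) :
    dist (zalcmanCenter l) a = |1 / 2 ^ l - a| := by
  rw [zalcmanCenter, Complex.isometry_ofReal.dist_eq, Real.dist_eq]

theorem dist_zalcmanCenter (l m : ℕ) :
    dist (zalcmanCenter l) (zalcmanCenter m) = |1 / 2 ^ l - 1 / 2 ^ m| :=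
  dist_zalcmanCenter_ofReal l _

theorem zalcmanRadius_eq (l : ℕ) : zalcmanRadius l = (1 / 2 ^ l) ^ 3 := by
  rw [zalcmanRadius, pow_mul', one_div_pow]

theorem zalcmanRadius_pos (l : ℕ) : 0 < zalcmanRadius l := by
  rw [zalcmanRadius]; positivity

theorem zalcmanRadius_antitone : Antitone zalcmanRadius := fun _ _ h =>
  one_div_pow_le_one_div_pow_of_le one_le_two (by omega)

theorem zalcmanRadius_le {l : ℕ} (hl : 1 ≤ l) : zalcmanRadius l ≤ 1 / 2 ^ l / 4 := by
  have h0 : (0 : ℝ) < 1 / 2 ^ l := by positivity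
  have h1 : (1 : ℝ) / 2 ^ l ≤ 1 / 2 ^ 1 := one_div_pow_le_one_div_pow_of_le one_le_two hl
  rw [zalcmanRadius_eq]
  nlinarith [mul_pos h0 h0]

theorem zalcmanRadius_add_lt_dist {l m : ℕ} (hl : 1 ≤ l) (hm : 1 ≤ m) (hlm : l ≠ m) :
    zalcmanRadius l + zalcmanRadius m < dist (zalcmanCenter l) (zalcmanCenter m) := by
  wlog h : l < m generalizing l m
  · rw [add_comm, dist_comm]
    exact this hm hl hlm.symm (by omega)
  have hrm : zalcmanRadius m < zalcmanRadius l :=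
    one_div_pow_lt_one_div_pow_of_lt one_lt_two (by omega)
  have hxm : (1 : ℝ) / 2 ^ m ≤ 1 / 2 ^ l / 2 := by
    rw [div_div, ← pow_succ]
    exact one_div_pow_le_one_div_pow_of_le one_le_two h
  have hxl : (0 : ℝ) < 1 / 2 ^ l := by positivity
  rw [dist_zalcmanCenter, abs_of_nonneg (by linarith)]
  linarith [zalcmanRadius_le hl]

theorem zalcmanEps_pos (j : ℕ) : 0 < zalcmanEps j :=
  Real.rpow_pos_of_pos two_pos _

theorem eventually_zalcmanEps_lt_zalcmanRadius : ∀ᶠ j in atTop, zalcmanEps j < zalcmanRadius j := by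
  have hb : 1 < (2 : ℝ) ^ ((1 : ℝ) / 3) := Real.one_lt_rpow one_lt_two (by norm_num)
  filter_upwards [(tendsto_pow_const_div_const_pow_of_one_lt 1 hb).eventually
    (gt_mem_nhds (by norm_num : (0 : ℝ) < 1 / 3))] with j hj
  rw [pow_one, div_lt_iff₀ (by positivity), ← Real.rpow_natCast, ← Real.rpow_mul zero_le_two,
    show (1 : ℝ) / 3 * j = j / 3 by ring] at hj
  rw [zalcmanEps, zalcmanRadius, one_div, ← Real.rpow_natCast, ← Real.rpow_neg zero_le_two,
    Real.rpow_lt_rpow_left_iff one_lt_two]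
  push_cast
  linarith

theorem exp_neg_log_two_div_zalcmanT_rpow (j : ℕ) :
    Real.exp (-Real.log 2 / zalcmanT j ^ ((1 : ℝ) / 3)) = zalcmanEps j := by
  rw [zalcmanT, zalcmanEps, Real.rpow_def_of_pos two_pos, one_div, Real.inv_rpow (by positivity),
    ← Real.rpow_natCast, ← Real.rpow_mul zero_le_two, div_inv_eq_mul]
  ring_nf

theorem norm_zalcmanCenter (l : ℕ) : ‖zalcmanCenter l‖ = 1 / 2 ^ l := by
  rw [← dist_zero_right, ← Complex.ofReal_zero, dist_zalcmanCenter_ofReal, sub_zero,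
    abs_of_pos (by positivity)]

theorem closedBall_zalcmanCenter_subset {l : ℕ} (hl : 1 ≤ l) {s : ℝ} (hs : s ≤ zalcmanRadius l) :
    closedBall (zalcmanCenter l) s ⊆ closedBall 0 (2 / 2 ^ l) := by
  intro y hy
  rw [mem_closedBall, dist_zero_right]
  calc ‖y‖ ≤ ‖zalcmanCenter l‖ + dist y (zalcmanCenter l) := by
        rw [dist_eq_norm]; exact norm_le_norm_add_norm_sub' y _
    _ ≤ 2 / 2 ^ l := by
        rw [norm_zalcmanCenter, show (2 : ℝ) / 2 ^ l = 2 * (1 / 2 ^ l) by ring]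
        have hxl : (0 : ℝ) < 1 / 2 ^ l := by positivity
        linarith [mem_closedBall.1 hy, zalcmanRadius_le hl]

theorem closedBall_zalcmanCenter_subset_ball (j : ℕ) {l : ℕ} (hl : 1 ≤ l) {s : ℝ}
    (hs : s ≤ zalcmanRadius l) : closedBall (zalcmanCenter l) s ⊆ ball 0 (1 + zalcmanEps j) := by
  refine (closedBall_zalcmanCenter_subset hl hs).trans (closedBall_subset_ball ?_)
  have h2 : (2 : ℝ) / 2 ^ l ≤ 2 / 2 ^ 1 :=
    div_le_div_of_nonneg_left zero_le_two (by norm_num) (pow_le_pow_right₀ one_le_two hl)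
  linarith [zalcmanEps_pos j]

theorem frontier_zalcmanD_subset : frontier zalcmanD ⊆
    insert 0 (sphere 0 1 ∪ ⋃ l : ℕ, sphere (zalcmanCenter (l + 1)) (zalcmanRadius (l + 1))) := by
  set U := ⋃ l : ℕ, ball (zalcmanCenter (l + 1)) (zalcmanRadius (l + 1))
  have hU : IsOpen U := isOpen_iUnion fun _ => isOpen_ball
  have hδ : Tendsto (fun l : ℕ => (2 : ℝ) / 2 ^ (l + 1)) atTop (𝓝 0) :=
    tendsto_const_nhds.div_atTop
      ((tendsto_pow_atTop_atTop_of_one_lt one_lt_two).comp (tendsto_add_atTop_nat 1))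
  have hcl : closure U ⊆
      insert 0 (⋃ l : ℕ, closedBall (zalcmanCenter (l + 1)) (zalcmanRadius (l + 1))) :=
    (closure_iUnion_subset_insert_of_tendsto hδ fun l => ball_subset_closedBall.trans
      (closedBall_zalcmanCenter_subset (Nat.le_add_left 1 l) le_rfl)).trans
      (insert_subset_insert (iUnion_mono fun _ => closure_ball_subset_closedBall))
  intro p hp
  rcases frontier_ball_diff_closure_subset 0 1 U hp with hp | hp
  · exact Or.inr (Or.inl hp)
  rw [hU.frontier_eq] at hp
  rcases hcl hp.1 with hp0 | hpl
  · exact Or.inl hp0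
  obtain ⟨l, hl⟩ := mem_iUnion.1 hpl
  have hpl : p ∉ ball _ _ := fun h => hp.2 (mem_iUnion.2 ⟨l, h⟩)
  exact Or.inr (Or.inr (mem_iUnion.2
    ⟨l, mem_sphere.2 (le_antisymm (mem_closedBall.1 hl) (not_lt.1 hpl))⟩))

theorem closure_zalcmanD_subset :
    closure zalcmanD ⊆
      closedBall 0 1 \ ⋃ l : ℕ, ball (zalcmanCenter (l + 1)) (zalcmanRadius (l + 1)) :=
  closure_ball_diff_closure_subset 0 1 (isOpen_iUnion fun _ => isOpen_ball)

theorem frontier_zalcmanDt_subset (j : ℕ) : frontier (zalcmanDt j) ⊆ sphere 0 (1 + zalcmanEps j) ∪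
    ⋃ l ∈ Finset.Icc 1 j, closedBall (zalcmanCenter l) (zalcmanRadius l - zalcmanEps j) :=
  (frontier_ball_diff_closure_subset _ _ _).trans
    (union_subset_union_right _ (frontier_subset_closure.trans (closure_biUnion_ball_subset _ _ _)))

theorem sphere_subset_frontier_zalcmanDt (j : ℕ) :
    sphere 0 (1 + zalcmanEps j) ⊆ frontier (zalcmanDt j) := by
  intro z hz
  have hzC : z ∉ closure (⋃ l ∈ Finset.Icc 1 j,
      ball (zalcmanCenter l) (zalcmanRadius l - zalcmanEps j)) := by
    intro h
    obtain ⟨l, hl, hzl⟩ := mem_iUnion₂.1 (closure_biUnion_ball_subset _ _ _ h)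
    have := closedBall_zalcmanCenter_subset_ball j (Finset.mem_Icc.1 hl).1
      (sub_le_self _ (zalcmanEps_pos j).le) hzl
    rw [mem_ball, ← mem_sphere.1 hz] at this
    exact lt_irrefl _ this
  rw [← frontier_ball 0 (by linarith [zalcmanEps_pos j])] at hz
  exact frontier_diff_subset_frontier_sdiff isClosed_closure ⟨hz, hzC⟩

theorem sphere_zalcmanCenter_subset_frontier_zalcmanDt {j l : ℕ} (hl : l ∈ Finset.Icc 1 j)
    (hε : zalcmanEps j < zalcmanRadius l) :
    sphere (zalcmanCenter l) (zalcmanRadius l - zalcmanEps j) ⊆ frontier (zalcmanDt j) := by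
  intro z hz
  have hsep : ∀ i ∈ Finset.Icc 1 j, ∀ k ∈ Finset.Icc 1 j, i ≠ k →
      zalcmanRadius i - zalcmanEps j + (zalcmanRadius k - zalcmanEps j) <
        dist (zalcmanCenter i) (zalcmanCenter k) := fun i hi k hk hik => by
    linarith [zalcmanEps_pos j, zalcmanRadius_add_lt_dist (Finset.mem_Icc.1 hi).1
      (Finset.mem_Icc.1 hk).1 hik]
  have hzC := sphere_subset_frontier_closure_biUnion_ball hsep hl (sub_pos.2 hε) hz
  have hzB := closedBall_zalcmanCenter_subset_ball j (Finset.mem_Icc.1 hl).1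
    (sub_le_self _ (zalcmanEps_pos j).le) (sphere_subset_closedBall hz)
  exact inter_frontier_subset_frontier_sdiff isOpen_ball ⟨hzB, hzC⟩

theorem exists_mem_frontier_zalcmanDt_dist_le {j : ℕ} (hj : 1 ≤ j)
    (hε : zalcmanEps j < zalcmanRadius j) {p : ℂ} (hp : p ∈ frontier zalcmanD) :
    ∃ q ∈ frontier (zalcmanDt j), dist p q ≤ zalcmanT j := by
  have hε0 := zalcmanEps_pos j
  have hrj := zalcmanRadius_le hj
  have hεt : zalcmanEps j ≤ zalcmanT j := by rw [zalcmanT]; linarith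
  set Λ : ℝ := 1 / 2 ^ j - (zalcmanRadius j - zalcmanEps j) with hΛdef
  have hΛ : (Λ : ℂ) ∈ frontier (zalcmanDt j) := by
    refine sphere_zalcmanCenter_subset_frontier_zalcmanDt (Finset.mem_Icc.2 ⟨hj, le_rfl⟩) hε ?_
    rw [mem_sphere, dist_comm, dist_zalcmanCenter_ofReal, sub_sub_cancel, abs_of_pos (sub_pos.2 hε)]
  rcases frontier_zalcmanD_subset hp with rfl | hp1 | hpl
  · refine ⟨Λ, hΛ, ?_⟩
    rw [dist_zero_left, Complex.norm_real, Real.norm_eq_abs, abs_of_nonneg (by linarith), zalcmanT]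
    linarith
  · obtain ⟨q, hq, hpq⟩ :=
      exists_mem_sphere_dist_eq hp1 one_pos (by linarith : (0 : ℝ) ≤ 1 + zalcmanEps j)
    refine ⟨q, sphere_subset_frontier_zalcmanDt j hq, ?_⟩
    rw [hpq, abs_of_nonpos (by linarith)]
    linarith
  obtain ⟨l, hpl⟩ := mem_iUnion.1 hpl
  rcases le_or_gt (l + 1) j with hlj | hjl
  · have hεl : zalcmanEps j < zalcmanRadius (l + 1) := hε.trans_le (zalcmanRadius_antitone hlj)
    obtain ⟨q, hq, hpq⟩ :=
      exists_mem_sphere_dist_eq hpl (zalcmanRadius_pos _) (sub_nonneg.2 hεl.le)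
    refine ⟨q, sphere_zalcmanCenter_subset_frontier_zalcmanDt
      (Finset.mem_Icc.2 ⟨Nat.le_add_left 1 l, hlj⟩) hεl hq, ?_⟩
    rwa [hpq, sub_sub_cancel, abs_of_pos hε0]
  · refine ⟨Λ, hΛ, (dist_triangle p (zalcmanCenter (l + 1)) Λ).trans ?_⟩
    have hxl : (1 : ℝ) / 2 ^ (l + 1) ≤ 1 / 2 ^ j / 2 := by
      rw [div_div, ← pow_succ]
      exact one_div_pow_le_one_div_pow_of_le one_le_two hjl
    rw [mem_sphere.1 hpl, dist_zalcmanCenter_ofReal, abs_of_nonpos (by linarith), zalcmanT]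
    have hxl0 : (0 : ℝ) < 1 / 2 ^ (l + 1) := by positivity
    linarith [zalcmanRadius_le (Nat.le_add_left 1 l)]

theorem zalcmanEps_le_dist {j : ℕ} {p q : ℂ} (hp : p ∈ closure zalcmanD)
    (hq : q ∈ frontier (zalcmanDt j)) : zalcmanEps j ≤ dist p q := by
  obtain ⟨hp1, hpU⟩ := closure_zalcmanD_subset hp
  rcases frontier_zalcmanDt_subset j hq with hq | hq
  · rw [mem_closedBall, dist_zero_right] at hp1
    rw [mem_sphere, dist_zero_right] at hq
    rw [dist_comm, dist_eq_norm]
    linarith [norm_sub_norm_le q p]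
  · obtain ⟨l, hl, hql⟩ := mem_iUnion₂.1 hq
    obtain ⟨k, rfl⟩ : ∃ k, l = k + 1 := ⟨l - 1, by have := (Finset.mem_Icc.1 hl).1; omega⟩
    have hpk : p ∉ ball _ _ := fun h => hpU (mem_iUnion.2 ⟨k, h⟩)
    rw [mem_ball, not_lt] at hpk
    linarith [mem_closedBall.1 hql, dist_triangle p q (zalcmanCenter (k + 1))]

/-- For all sufficiently large `j`,
`sup_{x ∈ ∂D} dist(x, ∂D^{t_j}) ≤ t_j` and
`inf_{x ∈ ∂D} dist(x, ∂D^{t_j}) ≥ exp(−(log 2)/t_j^{1/3})`. -/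
theorem zalcman_boundary_distance_estimates :
    ∃ N : ℕ, ∀ j : ℕ, N ≤ j →
      (∀ p ∈ frontier zalcmanD,
        Metric.infDist p (frontier (zalcmanDt j)) ≤ zalcmanT j) ∧
      (∀ p ∈ frontier zalcmanD,
        Real.exp (-(Real.log 2) / (zalcmanT j) ^ ((1 : ℝ) / 3)) ≤
          Metric.infDist p (frontier (zalcmanDt j))) := by
  obtain ⟨N, hN⟩ := eventually_atTop.1
    (eventually_zalcmanEps_lt_zalcmanRadius.and (eventually_ge_atTop 1))
  refine ⟨N, fun j hj => ⟨fun p hp => ?_, fun p hp => ?_⟩⟩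
  · obtain ⟨q, hq, hpq⟩ := exists_mem_frontier_zalcmanDt_dist_le (hN j hj).2 (hN j hj).1 hp
    exact (infDist_le_dist_of_mem hq).trans hpq
  · have hne : (frontier (zalcmanDt j)).Nonempty :=
      (NormedSpace.sphere_nonempty.2 (by linarith [zalcmanEps_pos j])).mono
        (sphere_subset_frontier_zalcmanDt j)
    rw [exp_neg_log_two_div_zalcmanT_rpow, le_infDist hne]
    exact fun q hq => zalcmanEps_le_dist (frontier_subset_closure hp) hq
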